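/- The total number of humps in all Schröder paths of order n equals (1/2)·(∑_{k=0}^{n} C(n+k,2k)·C(2k,k) − 1). -/
import Mathlib

inductive SStep | U | F | D
deriving DecidableEq

def IsSchroeder (n : ℕ) (w : List SStep) : Prop :=
  (w.count SStep.U + w.count SStep.F = n ∧ w.count SStep.U = w.count SStep.D) ∧
    ∀ p, p <+: w → p.count SStep.D ≤ p.count SStep.U

def IsHumpAt (w : List SStep) (i : ℕ) : Prop :=
  ∃ k, w[i]? = some SStep.U ∧ (∀ j < k, w[i + 1 + j]? = some SStep.F) ∧
    w[i + 1 + k]? = some SStep.D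

namespace SP
open List

def cU (w : List SStep) : ℕ := w.count SStep.U
def cF (w : List SStep) : ℕ := w.count SStep.F
def cD (w : List SStep) : ℕ := w.count SStep.D
def ordW (w : List SStep) : ℕ := cU w + cF w
def SchW (w : List SStep) : Prop := (∀ p, p <+: w → cD p ≤ cU p) ∧ cU w = cD w
def DelW (w : List SStep) : Prop := cU w = cD w


@[simp] theorem cU_nil : cU [] = 0 := rfl
@[simp] theorem cF_nil : cF [] = 0 := rfl
@[simp] theorem cD_nil : cD [] = 0 := rfl
@[simp] theorem cU_consU (w : List SStep) : cU (SStep.U :: w) = cU w + 1 := by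
  simp [cU, List.count_cons]
@[simp] theorem cU_consF (w : List SStep) : cU (SStep.F :: w) = cU w := by
  simp [cU, List.count_cons]
@[simp] theorem cU_consD (w : List SStep) : cU (SStep.D :: w) = cU w := by
  simp [cU, List.count_cons]
@[simp] theorem cF_consU (w : List SStep) : cF (SStep.U :: w) = cF w := by
  simp [cF, List.count_cons]
@[simp] theorem cF_consF (w : List SStep) : cF (SStep.F :: w) = cF w + 1 := by
  simp [cF, List.count_cons]
@[simp] theorem cF_consD (w : List SStep) : cF (SStep.D :: w) = cF w := by
  simp [cF, List.count_cons]
@[simp] theorem cD_consU (w : List SStep) : cD (SStep.U :: w) = cD w := by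
  simp [cD, List.count_cons]
@[simp] theorem cD_consF (w : List SStep) : cD (SStep.F :: w) = cD w := by
  simp [cD, List.count_cons]
@[simp] theorem cD_consD (w : List SStep) : cD (SStep.D :: w) = cD w + 1 := by
  simp [cD, List.count_cons]
@[simp] theorem cU_append (a b : List SStep) : cU (a ++ b) = cU a + cU b := by
  simp [cU, List.count_append]
@[simp] theorem cF_append (a b : List SStep) : cF (a ++ b) = cF a + cF b := by
  simp [cF, List.count_append]
@[simp] theorem cD_append (a b : List SStep) : cD (a ++ b) = cD a + cD b := by
  simp [cD, List.count_append]
@[simp] theorem cU_rep (n : ℕ) : cU (List.replicate n SStep.F) = 0 := by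
  simp [cU, List.count_replicate]
@[simp] theorem cF_rep (n : ℕ) : cF (List.replicate n SStep.F) = n := by
  simp [cF, List.count_replicate]
@[simp] theorem cD_rep (n : ℕ) : cD (List.replicate n SStep.F) = 0 := by
  simp [cD, List.count_replicate]

theorem len_eq (w : List SStep) : w.length = cU w + cF w + cD w := by
  induction w with
  | nil => simp
  | cons x t ih => cases x <;> simp [ih] <;> omega

theorem prefix_cases {p A B : List SStep} (h : p <+: A ++ B) :
    p <+: A ∨ ∃ q, q <+: B ∧ p = A ++ q := by
  rcases le_or_gt p.length A.length with hl | hl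
  · exact Or.inl (List.prefix_of_prefix_length_le h (A.prefix_append B) hl)
  · have hA : A <+: p := List.prefix_of_prefix_length_le (A.prefix_append B) h hl.le
    rcases hA with ⟨q, rfl⟩
    exact Or.inr ⟨q, (List.prefix_append_right_inj A).mp h, rfl⟩

theorem prefix_cons_cases {p : List SStep} {x : SStep} {L : List SStep} (h : p <+: x :: L) :
    p = [] ∨ ∃ q, q <+: L ∧ p = x :: q := by
  cases p with
  | nil => exact Or.inl rfl
  | cons y t =>
    rcases h with ⟨r, hr⟩
    rw [List.cons_append] at hr
    injection hr with h1 h2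
    exact Or.inr ⟨t, ⟨r, h2⟩, by rw [h1]⟩

theorem NN_unappend {X Y : List SStep} (h : ∀ p, p <+: X ++ Y → cD p ≤ cU p) :
    ∀ p, p <+: Y → cD X + cD p ≤ cU X + cU p := by
  intro p hp
  have := h (X ++ p) ((List.prefix_append_right_inj X).mpr hp)
  simpa using this

theorem first_excess : ∀ (w : List SStep) (t : ℕ),
    (∃ p, p <+: w ∧ cU p + t < cD p) →
    ∃ M N, w = M ++ SStep.D :: N ∧ (∀ p, p <+: M → cD p ≤ cU p + t) ∧ cD M = cU M + t := by
  intro w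
  induction w with
  | nil =>
    rintro t ⟨p, hp, hc⟩
    rw [List.prefix_nil] at hp
    subst hp; simp at hc
  | cons x w ih =>
    rintro t ⟨p, hp, hc⟩
    rcases prefix_cons_cases hp with rfl | ⟨q, hq, rfl⟩
    · simp at hc
    · cases x with
      | U =>
        obtain ⟨M, N, rfl, h1, h2⟩ := ih (t + 1)
          ⟨q, hq, by simp at hc; omega⟩
        refine ⟨SStep.U :: M, N, rfl, ?_, by simp; omega⟩
        intro p hp'
        rcases prefix_cons_cases hp' with rfl | ⟨q', hq', rfl⟩
        · simp
        · have := h1 q' hq'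
          simp; omega
      | F =>
        obtain ⟨M, N, rfl, h1, h2⟩ := ih t
          ⟨q, hq, by simp at hc; omega⟩
        refine ⟨SStep.F :: M, N, rfl, ?_, by simp; omega⟩
        intro p hp'
        rcases prefix_cons_cases hp' with rfl | ⟨q', hq', rfl⟩
        · simp
        · have := h1 q' hq'
          simp; omega
      | D =>
        cases t with
        | zero =>
          refine ⟨[], w, rfl, ?_, by simp⟩
          intro p hp'
          rw [List.prefix_nil] at hp'; subst hp'; simp
        | succ s =>
          obtain ⟨M, N, rfl, h1, h2⟩ := ih s
            ⟨q, hq, by simp at hc; omega⟩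
          refine ⟨SStep.D :: M, N, rfl, ?_, by simp; omega⟩
          intro p hp'
          rcases prefix_cons_cases hp' with rfl | ⟨q', hq', rfl⟩
          · simp
          · have := h1 q' hq'
            simp; omega

theorem rep_cancel {x y : SStep} (hx : x ≠ SStep.F) (hy : y ≠ SStep.F) :
    ∀ {a : ℕ} {X : List SStep} {a' : ℕ} {X' : List SStep},
      replicate a SStep.F ++ x :: X = replicate a' SStep.F ++ y :: X' →
      a = a' ∧ x = y ∧ X = X' := by
  intro a
  induction a with
  | zero =>
    intro X a' X' h
    cases a' with
    | zero => simpa using h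
    | succ b =>
      rw [List.replicate_succ] at h
      simp at h
      exact absurd h.1 hx
  | succ b ih =>
    intro X a' X' h
    cases a' with
    | zero =>
      rw [List.replicate_succ] at h
      simp at h
      exact absurd h.1.symm hy
    | succ b' =>
      rw [List.replicate_succ, List.replicate_succ] at h
      simp only [List.cons_append] at h
      injection h with _ h2
      obtain ⟨h3, h4, h5⟩ := ih h2
      exact ⟨by omega, h4, h5⟩

theorem flats_split' (A : List SStep) :
    (∃ a, A = replicate a SStep.F) ∨
      ∃ a x r, x ≠ SStep.F ∧ A = replicate a SStep.F ++ x :: r := by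
  induction A with
  | nil => exact Or.inl ⟨0, rfl⟩
  | cons y t ih =>
    by_cases hy : y = SStep.F
    · subst hy
      rcases ih with ⟨a, rfl⟩ | ⟨a, x, r, hx, rfl⟩
      · exact Or.inl ⟨a + 1, by rw [List.replicate_succ]⟩
      · exact Or.inr ⟨a + 1, x, r, hx, by rw [List.replicate_succ]; rfl⟩
    · exact Or.inr ⟨0, y, t, hy, rfl⟩

theorem flats_split {A : List SStep} (h : ∀ p, p <+: A → cD p ≤ cU p) :
    (∃ a, A = replicate a SStep.F) ∨ ∃ a r, A = replicate a SStep.F ++ SStep.U :: r := by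
  rcases flats_split' A with h1 | ⟨a, x, r, hx, rfl⟩
  · exact Or.inl h1
  · cases x with
    | U => exact Or.inr ⟨a, r, rfl⟩
    | F => exact absurd rfl hx
    | D =>
      exfalso
      have hp : replicate a SStep.F ++ [SStep.D] <+: replicate a SStep.F ++ SStep.D :: r :=
        (List.prefix_append_right_inj _).mpr ⟨r, rfl⟩
      have := h _ hp
      simp at this

/-! ### Glue words -/

def g2 (A : List SStep) (k : ℕ) (B : List SStep) : List SStep :=
  A ++ SStep.U :: (List.replicate k SStep.F ++ SStep.D :: B)

def gl (a : ℕ) (M N : List SStep) : List SStep :=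
  List.replicate a SStep.F ++ SStep.U :: (M ++ SStep.D :: N)

@[simp] theorem cU_g2 (A k B) : cU (g2 A k B) = cU A + cU B + 1 := by simp [g2]; try omega
@[simp] theorem cF_g2 (A k B) : cF (g2 A k B) = cF A + cF B + k := by simp [g2]; try omega
@[simp] theorem cD_g2 (A k B) : cD (g2 A k B) = cD A + cD B + 1 := by simp [g2]; try omega
@[simp] theorem cU_gl (a M N) : cU (gl a M N) = cU M + cU N + 1 := by simp [gl]; try omega
@[simp] theorem cF_gl (a M N) : cF (gl a M N) = a + cF M + cF N := by simp [gl]; try omega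
@[simp] theorem cD_gl (a M N) : cD (gl a M N) = cD M + cD N + 1 := by simp [gl]; try omega

theorem NN_append' {X Y : List SStep} (hX : ∀ p, p <+: X → cD p ≤ cU p)
    (hY : ∀ p, p <+: Y → cD X + cD p ≤ cU X + cU p) :
    ∀ p, p <+: X ++ Y → cD p ≤ cU p := by
  intro p hp
  rcases prefix_cases hp with h1 | ⟨q, hq, rfl⟩
  · exact hX p h1
  · have := hY q hq; simp; omega

theorem NN_rep (a : ℕ) : ∀ p, p <+: List.replicate a SStep.F → cD p ≤ cU p := by
  intro p hp
  have h1 : cD p ≤ cD (List.replicate a SStep.F) := hp.sublist.count_le SStep.D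
  simp at h1; omega

theorem NN_gl {a : ℕ} {M N : List SStep} (hM1 : ∀ p, p <+: M → cD p ≤ cU p)
    (hM2 : cU M = cD M) (hN1 : ∀ p, p <+: N → cD p ≤ cU p) :
    ∀ p, p <+: gl a M N → cD p ≤ cU p := by
  unfold gl
  apply NN_append' (NN_rep a)
  intro p hp
  rcases prefix_cons_cases hp with rfl | ⟨q, hq, rfl⟩
  · simp
  · rcases prefix_cases hq with h1 | ⟨r, hr, rfl⟩
    · have := hM1 q h1; simp; omega
    · rcases prefix_cons_cases hr with rfl | ⟨s, hs, rfl⟩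
      · simp; omega
      · have := hN1 s hs; simp; omega

theorem SchW_gl {a : ℕ} {M N : List SStep} (hM : SchW M) (hN : SchW N) :
    SchW (gl a M N) := by
  refine ⟨NN_gl hM.1 hM.2 hN.1, ?_⟩
  have h1 := hM.2; have h2 := hN.2
  simp; omega

theorem NN_of_gl_right {a : ℕ} {M N : List SStep} (hM : cU M = cD M)
    (h : ∀ p, p <+: gl a M N → cD p ≤ cU p) :
    ∀ p, p <+: N → cD p ≤ cU p := by
  have e : gl a M N = (List.replicate a SStep.F ++ SStep.U :: (M ++ [SStep.D])) ++ N := by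
    simp [gl]
  rw [e] at h
  intro p hp
  have := NN_unappend h p hp
  simp at this; omega

/-! ### Uniqueness of splittings -/

theorem splitD_aux {t : ℕ} {B N B' N' : List SStep}
    (h : B ++ SStep.D :: N = B' ++ SStep.D :: N')
    (hB : cD B = cU B + t)
    (hNB' : ∀ p, p <+: B' → cD p ≤ cU p + t)
    (hl : B.length < B'.length) : False := by
  have h1 : B ++ [SStep.D] <+: B' ++ SStep.D :: N' := by
    rw [← h]
    have : B ++ SStep.D :: N = (B ++ [SStep.D]) ++ N := by simp
    rw [this]
    exact (B ++ [SStep.D]).prefix_append N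
  have h2 : B ++ [SStep.D] <+: B' :=
    List.prefix_of_prefix_length_le h1 (B'.prefix_append _) (by simp; omega)
  have := hNB' _ h2
  simp at this; omega

theorem splitD_unique {t : ℕ} {B N B' N' : List SStep}
    (h : B ++ SStep.D :: N = B' ++ SStep.D :: N')
    (hB : cD B = cU B + t) (hB' : cD B' = cU B' + t)
    (hNB : ∀ p, p <+: B → cD p ≤ cU p + t)
    (hNB' : ∀ p, p <+: B' → cD p ≤ cU p + t) :
    B = B' ∧ N = N' := by
  rcases lt_trichotomy B.length B'.length with hl | hl | hl
  · exact absurd (splitD_aux h hB hNB' hl) (by simp)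
  · obtain ⟨h1, h2⟩ := List.append_inj h hl
    refine ⟨h1, by simpa using h2⟩
  · exact absurd (splitD_aux h.symm hB' hNB hl) (by simp)

theorem gl_inj {a a' : ℕ} {M N M' N' : List SStep} (h : gl a M N = gl a' M' N')
    (hM : SchW M) (hM' : SchW M') : a = a' ∧ M = M' ∧ N = N' := by
  unfold gl at h
  obtain ⟨h1, -, h2⟩ := rep_cancel (by simp) (by simp) h
  obtain ⟨h3, h4⟩ := splitD_unique (t := 0) h2 (by have := hM.2; omega)
    (by have := hM'.2; omega) (fun p hp => by simpa using hM.1 p hp)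
    (fun p hp => by simpa using hM'.1 p hp)
  exact ⟨h1, h3, h4⟩

theorem g2_inj {A A' B B' : List SStep} {k k' : ℕ} (h : g2 A k B = g2 A' k' B')
    (hl : A.length = A'.length) : A = A' ∧ k = k' ∧ B = B' := by
  unfold g2 at h
  obtain ⟨h1, h2⟩ := List.append_inj h hl
  injection h2 with _ h3
  obtain ⟨h4, -, h5⟩ := rep_cancel (x := SStep.D) (y := SStep.D) (by simp) (by simp) h3
  exact ⟨h1, h4, h5⟩

/-! ### Finiteness and cardinality helpers -/

instance : Fintype SStep :=
  { elems := {SStep.U, SStep.F, SStep.D}, complete := by intro x; cases x <;> simp }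

theorem finite_list {P : List SStep → Prop} {N : ℕ} (hb : ∀ w, P w → w.length ≤ N) :
    Finite {w // P w} := by
  have h1 : {l : List SStep | l.length ≤ N}.Finite := List.finite_length_le SStep N
  have h2 : Finite {l : List SStep // l.length ≤ N} := h1.to_subtype
  refine Finite.of_injective
    (fun w => (⟨w.1, hb _ w.2⟩ : {l : List SStep // l.length ≤ N})) ?_
  intro a b hab
  apply Subtype.ext
  have := congrArg Subtype.val hab
  simpa using this

theorem finite_pair {P : List SStep × ℕ → Prop} {N : ℕ}
    (hb : ∀ x, P x → x.1.length ≤ N ∧ x.2 ≤ N) : Finite {x // P x} := by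
  have h1 : {l : List SStep | l.length ≤ N}.Finite := List.finite_length_le SStep N
  have h2 : Finite {l : List SStep // l.length ≤ N} := h1.to_subtype
  refine Finite.of_injective
    (fun x => ((⟨x.1.1, (hb _ x.2).1⟩ : {l : List SStep // l.length ≤ N}),
      (⟨x.1.2, by have := (hb _ x.2).2; omega⟩ : Fin (N + 1)))) ?_
  intro a b hab
  have e1 : a.1.1 = b.1.1 := congrArg (fun y => y.1.1) hab
  have e2 : a.1.2 = b.1.2 := congrArg (fun y => (y.2 : ℕ)) hab
  exact Subtype.ext (Prod.ext e1 e2)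

theorem finite_tri {P : List SStep × ℕ × List SStep → Prop} {N : ℕ}
    (hb : ∀ x, P x → x.1.length ≤ N ∧ x.2.1 ≤ N ∧ x.2.2.length ≤ N) : Finite {x // P x} := by
  have h1 : {l : List SStep | l.length ≤ N}.Finite := List.finite_length_le SStep N
  have h2 : Finite {l : List SStep // l.length ≤ N} := h1.to_subtype
  refine Finite.of_injective
    (fun x => ((⟨x.1.1, (hb _ x.2).1⟩ : {l : List SStep // l.length ≤ N}),
      (⟨x.1.2.1, by have := (hb _ x.2).2.1; omega⟩ : Fin (N + 1)),
      (⟨x.1.2.2, (hb _ x.2).2.2⟩ : {l : List SStep // l.length ≤ N}))) ?_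
  intro a b hab
  have e1 : a.1.1 = b.1.1 := congrArg (fun y => y.1.1) hab
  have e2 : a.1.2.1 = b.1.2.1 := congrArg (fun y => (y.2.1 : ℕ)) hab
  have e3 : a.1.2.2 = b.1.2.2 := congrArg (fun y => y.2.2.1) hab
  exact Subtype.ext (Prod.ext e1 (Prod.ext e2 e3))

theorem card_three' {γ A B C : Type} [Finite γ]
    (f : A → γ) (g : B → γ) (h : C → γ)
    (hf : Function.Injective f) (hg : Function.Injective g) (hh : Function.Injective h)
    (cover : ∀ c, (∃ a, f a = c) ∨ (∃ b, g b = c) ∨ (∃ x, h x = c))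
    (dfg : ∀ a b, f a ≠ g b) (dfh : ∀ a x, f a ≠ h x) (dgh : ∀ b x, g b ≠ h x) :
    Nat.card γ = Nat.card A + Nat.card B + Nat.card C := by
  have hA : Finite A := Finite.of_injective f hf
  have hB : Finite B := Finite.of_injective g hg
  have hC : Finite C := Finite.of_injective h hh
  have e : (A ⊕ B ⊕ C) ≃ γ := by
    refine Equiv.ofBijective (fun s => match s with
      | Sum.inl a => f a
      | Sum.inr (Sum.inl b) => g b
      | Sum.inr (Sum.inr c) => h c) ⟨?_, ?_⟩
    · rintro (a | b | c) (a' | b' | c') hs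
      · exact congrArg Sum.inl (hf hs)
      · exact absurd hs (dfg a b')
      · exact absurd hs (dfh a c')
      · exact absurd hs.symm (dfg a' b)
      · exact congrArg (Sum.inr ∘ Sum.inl) (hg hs)
      · exact absurd hs (dgh b c')
      · exact absurd hs.symm (dfh a' c)
      · exact absurd hs.symm (dgh b' c)
      · exact congrArg (Sum.inr ∘ Sum.inr) (hh hs)
    · intro c
      rcases cover c with ⟨a, rfl⟩ | ⟨b, rfl⟩ | ⟨x, rfl⟩
      exacts [⟨Sum.inl a, rfl⟩, ⟨Sum.inr (Sum.inl b), rfl⟩, ⟨Sum.inr (Sum.inr x), rfl⟩]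
  rw [← Nat.card_congr e, Nat.card_sum, Nat.card_sum]
  omega

theorem natCard_sigma_finset {ι : Type} (s : Finset ι) (f : ι → Type) [∀ i, Finite (f i)] :
    Nat.card ((j : {x // x ∈ s}) × f j.1) = ∑ i ∈ s, Nat.card (f i) := by
  letI : ∀ i, Fintype (f i) := fun i => Fintype.ofFinite _
  rw [Nat.card_eq_fintype_card, Fintype.card_sigma]
  rw [← Finset.sum_coe_sort s (fun i => Nat.card (f i))]
  exact Finset.sum_congr rfl fun j _ => Nat.card_eq_fintype_card.symm

/-! ### Counting functions -/

noncomputable def sN (n : ℕ) : ℕ := Nat.card {w : List SStep // SchW w ∧ ordW w = n}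
noncomputable def dN (n : ℕ) : ℕ := Nat.card {w : List SStep // DelW w ∧ ordW w = n}
noncomputable def vN (n : ℕ) : ℕ := Nat.card {w : List SStep //
  (DelW w ∧ ordW w = n) ∧ ∃ a r, w = List.replicate a SStep.F ++ SStep.U :: r}
noncomputable def hN (n : ℕ) : ℕ := Nat.card {x : List SStep × ℕ × List SStep //
  SchW (g2 x.1 x.2.1 x.2.2) ∧ ordW (g2 x.1 x.2.1 x.2.2) = n}

theorem len_le_of_del {w : List SStep} {n : ℕ} (h1 : cU w = cD w) (h2 : ordW w = n) :
    w.length ≤ 2 * n := by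
  have := len_eq w
  unfold ordW at h2
  omega

instance finS (n : ℕ) : Finite {w : List SStep // SchW w ∧ ordW w = n} :=
  finite_list (N := 2 * n) fun w hw => len_le_of_del hw.1.2 hw.2

instance finD (n : ℕ) : Finite {w : List SStep // DelW w ∧ ordW w = n} :=
  finite_list (N := 2 * n) fun w hw => len_le_of_del hw.1 hw.2

instance finV (n : ℕ) : Finite {w : List SStep //
    (DelW w ∧ ordW w = n) ∧ ∃ a r, w = List.replicate a SStep.F ++ SStep.U :: r} :=
  finite_list (N := 2 * n) fun w hw => len_le_of_del hw.1.1 hw.1.2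

theorem g2_len (A : List SStep) (k : ℕ) (B : List SStep) :
    (g2 A k B).length = A.length + k + 2 + B.length := by
  simp [g2]; omega

instance finH (n : ℕ) : Finite {x : List SStep × ℕ × List SStep //
    SchW (g2 x.1 x.2.1 x.2.2) ∧ ordW (g2 x.1 x.2.1 x.2.2) = n} := by
  apply finite_tri (N := 2 * n)
  rintro ⟨A, k, B⟩ ⟨h1, h2⟩
  have h3 := len_le_of_del h1.2 h2
  rw [g2_len] at h3
  exact ⟨by omega, by omega, by omega⟩

/-! ### Counting words by letter counts -/

noncomputable def N3 (u f d : ℕ) : ℕ :=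
  Nat.card {w : List SStep // cU w = u ∧ cF w = f ∧ cD w = d}

instance finN3 (u f d : ℕ) : Finite {w : List SStep // cU w = u ∧ cF w = f ∧ cD w = d} :=
  finite_list (N := u + f + d) fun w hw => by
    have := len_eq w; omega

theorem N3_zero : N3 0 0 0 = 1 := by
  have e : {w : List SStep // cU w = 0 ∧ cF w = 0 ∧ cD w = 0} ≃ Unit :=
    { toFun := fun _ => ()
      invFun := fun _ => ⟨[], by simp⟩
      left_inv := by
        rintro ⟨w, hw⟩
        have hl : w.length = 0 := by have := len_eq w; omega
        have : w = [] := List.length_eq_zero_iff.mp hl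
        subst this; rfl
      right_inv := fun _ => rfl }
  rw [N3, Nat.card_congr e, Nat.card_unique]

theorem cardConsU (u f d : ℕ) :
    Nat.card {w : List SStep // cU (SStep.U :: w) = u ∧ cF (SStep.U :: w) = f ∧
      cD (SStep.U :: w) = d} = if u = 0 then 0 else N3 (u - 1) f d := by
  rcases u with _ | u'
  · rw [if_pos rfl]
    haveI : IsEmpty {w : List SStep // cU (SStep.U :: w) = 0 ∧ cF (SStep.U :: w) = f ∧
        cD (SStep.U :: w) = d} := ⟨by rintro ⟨w, hw⟩; simp at hw⟩
    exact Nat.card_of_isEmpty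
  · rw [if_neg (by omega)]
    apply Nat.card_congr
    exact Equiv.subtypeEquivRight fun w => by
      simp only [cU_consU, cF_consU, cD_consU, Nat.succ_sub_one]
      constructor
      · rintro ⟨h1, h2, h3⟩; exact ⟨by omega, h2, h3⟩
      · rintro ⟨h1, h2, h3⟩; exact ⟨by omega, h2, h3⟩

theorem cardConsF (u f d : ℕ) :
    Nat.card {w : List SStep // cU (SStep.F :: w) = u ∧ cF (SStep.F :: w) = f ∧
      cD (SStep.F :: w) = d} = if f = 0 then 0 else N3 u (f - 1) d := by
  rcases f with _ | f'
  · rw [if_pos rfl]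
    haveI : IsEmpty {w : List SStep // cU (SStep.F :: w) = u ∧ cF (SStep.F :: w) = 0 ∧
        cD (SStep.F :: w) = d} := ⟨by rintro ⟨w, hw⟩; simp at hw⟩
    exact Nat.card_of_isEmpty
  · rw [if_neg (by omega)]
    apply Nat.card_congr
    exact Equiv.subtypeEquivRight fun w => by
      simp only [cU_consF, cF_consF, cD_consF, Nat.succ_sub_one]
      constructor
      · rintro ⟨h1, h2, h3⟩; exact ⟨h1, by omega, h3⟩
      · rintro ⟨h1, h2, h3⟩; exact ⟨h1, by omega, h3⟩

theorem cardConsD (u f d : ℕ) :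
    Nat.card {w : List SStep // cU (SStep.D :: w) = u ∧ cF (SStep.D :: w) = f ∧
      cD (SStep.D :: w) = d} = if d = 0 then 0 else N3 u f (d - 1) := by
  rcases d with _ | d'
  · rw [if_pos rfl]
    haveI : IsEmpty {w : List SStep // cU (SStep.D :: w) = u ∧ cF (SStep.D :: w) = f ∧
        cD (SStep.D :: w) = 0} := ⟨by rintro ⟨w, hw⟩; simp at hw⟩
    exact Nat.card_of_isEmpty
  · rw [if_neg (by omega)]
    apply Nat.card_congr
    exact Equiv.subtypeEquivRight fun w => by
      simp only [cU_consD, cF_consD, cD_consD, Nat.succ_sub_one]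
      constructor
      · rintro ⟨h1, h2, h3⟩; exact ⟨h1, h2, by omega⟩
      · rintro ⟨h1, h2, h3⟩; exact ⟨h1, h2, by omega⟩

theorem N3_split (u f d : ℕ) (h : u + f + d ≠ 0) :
    N3 u f d = (if u = 0 then 0 else N3 (u - 1) f d) +
      (if f = 0 then 0 else N3 u (f - 1) d) +
      (if d = 0 then 0 else N3 u f (d - 1)) := by
  rw [← cardConsU, ← cardConsF, ← cardConsD]
  refine card_three'
    (fun x => (⟨SStep.U :: x.1, x.2⟩ : {w : List SStep // cU w = u ∧ cF w = f ∧ cD w = d}))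
    (fun x => ⟨SStep.F :: x.1, x.2⟩) (fun x => ⟨SStep.D :: x.1, x.2⟩)
    ?_ ?_ ?_ ?_ ?_ ?_ ?_
  · intro a b hab
    have := congrArg Subtype.val hab
    simp only at this
    exact Subtype.ext (by injection this)
  · intro a b hab
    have := congrArg Subtype.val hab
    simp only at this
    exact Subtype.ext (by injection this)
  · intro a b hab
    have := congrArg Subtype.val hab
    simp only at this
    exact Subtype.ext (by injection this)
  · rintro ⟨w, hw⟩
    cases w with
    | nil => exfalso; simp at hw; omega
    | cons x w' =>
      cases x with
      | U => exact Or.inl ⟨⟨w', hw⟩, rfl⟩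
      | F => exact Or.inr (Or.inl ⟨⟨w', hw⟩, rfl⟩)
      | D => exact Or.inr (Or.inr ⟨⟨w', hw⟩, rfl⟩)
  · intro a b hab
    have := congrArg Subtype.val hab
    simp at this
  · intro a b hab
    have := congrArg Subtype.val hab
    simp at this
  · intro a b hab
    have := congrArg Subtype.val hab
    simp at this

theorem N3_mul_factorial :
    ∀ T u f d : ℕ, u + f + d = T →
      N3 u f d * (u.factorial * f.factorial * d.factorial) = T.factorial := by
  intro T
  induction T with
  | zero =>
    intro u f d h
    have hu : u = 0 := by omega
    have hf : f = 0 := by omega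
    have hd : d = 0 := by omega
    subst hu; subst hf; subst hd
    simp [N3_zero]
  | succ t ih =>
    intro u f d h
    rw [N3_split u f d (by omega)]
    have hu : (if u = 0 then 0 else N3 (u - 1) f d) *
        (u.factorial * f.factorial * d.factorial) = u * t.factorial := by
      rcases u with _ | u'
      · simp
      · rw [if_neg (by omega), Nat.succ_sub_one, Nat.factorial_succ]
        calc N3 u' f d * ((u' + 1) * u'.factorial * f.factorial * d.factorial)
            = (u' + 1) * (N3 u' f d * (u'.factorial * f.factorial * d.factorial)) := by ring
          _ = (u' + 1) * t.factorial := by rw [ih u' f d (by omega)]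
    have hf : (if f = 0 then 0 else N3 u (f - 1) d) *
        (u.factorial * f.factorial * d.factorial) = f * t.factorial := by
      rcases f with _ | f'
      · simp
      · rw [if_neg (by omega), Nat.succ_sub_one, Nat.factorial_succ]
        calc N3 u f' d * (u.factorial * ((f' + 1) * f'.factorial) * d.factorial)
            = (f' + 1) * (N3 u f' d * (u.factorial * f'.factorial * d.factorial)) := by ring
          _ = (f' + 1) * t.factorial := by rw [ih u f' d (by omega)]
    have hd : (if d = 0 then 0 else N3 u f (d - 1)) *
        (u.factorial * f.factorial * d.factorial) = d * t.factorial := by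
      rcases d with _ | d'
      · simp
      · rw [if_neg (by omega), Nat.succ_sub_one, Nat.factorial_succ]
        calc N3 u f d' * (u.factorial * f.factorial * ((d' + 1) * d'.factorial))
            = (d' + 1) * (N3 u f d' * (u.factorial * f.factorial * d'.factorial)) := by ring
          _ = (d' + 1) * t.factorial := by rw [ih u f d' (by omega)]
    rw [add_mul, add_mul, hu, hf, hd, Nat.factorial_succ]
    have : u * t.factorial + f * t.factorial + d * t.factorial
        = (u + f + d) * t.factorial := by ring
    rw [this, h]

theorem N3_eq (u f d : ℕ) : N3 u f d = (u + f + d).choose (u + d) * (u + d).choose u := by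
  have h := N3_mul_factorial (u + f + d) u f d rfl
  have e1 := Nat.choose_mul_factorial_mul_factorial (show u + d ≤ u + f + d by omega)
  have e2 := Nat.choose_mul_factorial_mul_factorial (show u ≤ u + d by omega)
  have e3 : u + f + d - (u + d) = f := by omega
  have e4 : u + d - u = d := by omega
  rw [e3] at e1; rw [e4] at e2
  have h2 : ((u + f + d).choose (u + d) * (u + d).choose u) *
      (u.factorial * f.factorial * d.factorial) = (u + f + d).factorial := by
    calc ((u + f + d).choose (u + d) * (u + d).choose u) *
        (u.factorial * f.factorial * d.factorial)
        = ((u + d).choose u * u.factorial * d.factorial) *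
            (u + f + d).choose (u + d) * f.factorial := by ring
      _ = (u + d).factorial * (u + f + d).choose (u + d) * f.factorial := by rw [e2]
      _ = (u + f + d).choose (u + d) * (u + d).factorial * f.factorial := by ring
      _ = (u + f + d).factorial := e1
  have hpos : 0 < u.factorial * f.factorial * d.factorial := by positivity
  exact Nat.eq_of_mul_eq_mul_right hpos (h.trans h2.symm)

theorem dN_eq (n : ℕ) :
    dN n = ∑ k ∈ Finset.range (n + 1), (n + k).choose (2 * k) * (2 * k).choose k := by
  have E : {w : List SStep // DelW w ∧ ordW w = n} ≃
      (Σ k : Fin (n + 1), {w : List SStep // cU w = k.1 ∧ cF w = n - k.1 ∧ cD w = k.1}) := by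
    refine Equiv.ofBijective (fun w =>
      (⟨⟨cU w.1, by
        have h1 := w.2.1; have h2 := w.2.2; unfold DelW at h1; unfold ordW at h2; omega⟩,
        ⟨w.1, rfl, by
          show cF w.1 = n - cU w.1
          have h2 := w.2.2; unfold ordW at h2; omega, by
          show cD w.1 = cU w.1
          have h1 := w.2.1; unfold DelW at h1; omega⟩⟩ :
        Σ k : Fin (n + 1), {w : List SStep // cU w = k.1 ∧ cF w = n - k.1 ∧ cD w = k.1}))
      ⟨?_, ?_⟩
    · intro a b hab
      have : a.1 = b.1 := congrArg (fun x => x.2.1) hab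
      exact Subtype.ext this
    · rintro ⟨⟨k, hk⟩, w, h1, h2, h3⟩
      have h1' : cU w = k := h1
      subst h1'
      have h2' : cF w = n - cU w := h2
      have h3' : cD w = cU w := h3
      have hk' : cU w < n + 1 := hk
      refine ⟨⟨w, ?_, ?_⟩, rfl⟩
      · show cU w = cD w
        omega
      · show cU w + cF w = n
        omega
  rw [dN, Nat.card_congr E]
  letI : ∀ k : Fin (n + 1),
      Fintype {w : List SStep // cU w = k.1 ∧ cF w = n - k.1 ∧ cD w = k.1} :=
    fun k => Fintype.ofFinite _
  rw [Nat.card_eq_fintype_card, Fintype.card_sigma]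
  rw [← Fin.sum_univ_eq_sum_range
    (fun k => (n + k).choose (2 * k) * (2 * k).choose k) (n + 1)]
  refine Finset.sum_congr rfl fun k _ => ?_
  have : Fintype.card {w : List SStep // cU w = k.1 ∧ cF w = n - k.1 ∧ cD w = k.1}
      = N3 k.1 (n - k.1) k.1 := Nat.card_eq_fintype_card.symm
  rw [this, N3_eq]
  have hk : k.1 ≤ n := by omega
  have e1 : k.1 + (n - k.1) + k.1 = n + k.1 := by omega
  have e2 : k.1 + k.1 = 2 * k.1 := by omega
  rw [e1, e2]

/-! ### Reflection -/

def sw : SStep → SStep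
  | SStep.U => SStep.D
  | SStep.D => SStep.U
  | SStep.F => SStep.F

@[simp] theorem sw_sw (x : SStep) : sw (sw x) = x := by cases x <;> rfl

def swW (w : List SStep) : List SStep := w.map sw

@[simp] theorem swW_swW (w : List SStep) : swW (swW w) = w := by
  simp [swW, List.map_map, Function.comp_def]

@[simp] theorem cU_swW (w : List SStep) : cU (swW w) = cD w := by
  induction w with
  | nil => simp [swW]
  | cons x t ih =>
    cases x <;> simp only [swW, List.map_cons] at ih ⊢ <;>
      simp [sw, ih] <;> omega

@[simp] theorem cD_swW (w : List SStep) : cD (swW w) = cU w := by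
  induction w with
  | nil => simp [swW]
  | cons x t ih =>
    cases x <;> simp only [swW, List.map_cons] at ih ⊢ <;>
      simp [sw, ih] <;> omega

@[simp] theorem cF_swW (w : List SStep) : cF (swW w) = cF w := by
  induction w with
  | nil => simp [swW]
  | cons x t ih =>
    cases x <;> simp only [swW, List.map_cons] at ih ⊢ <;>
      simp [sw, ih] <;> omega

theorem swW_shape (a : ℕ) (r : List SStep) :
    swW (List.replicate a SStep.F ++ SStep.U :: r) =
      List.replicate a SStep.F ++ SStep.D :: swW r := by
  simp [swW, List.map_append, List.map_replicate, sw]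

theorem swW_shape' (a : ℕ) (r : List SStep) :
    swW (List.replicate a SStep.F ++ SStep.D :: r) =
      List.replicate a SStep.F ++ SStep.U :: swW r := by
  simp [swW, List.map_append, List.map_replicate, sw]

theorem dN_split (n : ℕ) : dN n = 1 + 2 * vN n := by
  classical
  have key : dN n =
      Nat.card {w : List SStep // (DelW w ∧ ordW w = n) ∧ ∃ a, w = List.replicate a SStep.F} +
      Nat.card {w : List SStep // (DelW w ∧ ordW w = n) ∧
        ∃ a r, w = List.replicate a SStep.F ++ SStep.U :: r} +
      Nat.card {w : List SStep // (DelW w ∧ ordW w = n) ∧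
        ∃ a r, w = List.replicate a SStep.F ++ SStep.D :: r} := by
    refine card_three'
      (fun x => (⟨x.1, x.2.1⟩ : {w : List SStep // DelW w ∧ ordW w = n}))
      (fun x => ⟨x.1, x.2.1⟩) (fun x => ⟨x.1, x.2.1⟩) ?_ ?_ ?_ ?_ ?_ ?_ ?_
    · intro a b hab
      apply Subtype.ext
      have := congrArg (fun (z : {w : List SStep // DelW w ∧ ordW w = n}) => z.1) hab
      simpa using this
    · intro a b hab
      apply Subtype.ext
      have := congrArg (fun (z : {w : List SStep // DelW w ∧ ordW w = n}) => z.1) hab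
      simpa using this
    · intro a b hab
      apply Subtype.ext
      have := congrArg (fun (z : {w : List SStep // DelW w ∧ ordW w = n}) => z.1) hab
      simpa using this
    · rintro ⟨w, hw⟩
      rcases flats_split' w with ⟨a, rfl⟩ | ⟨a, x, r, hx, rfl⟩
      · exact Or.inl ⟨⟨_, hw, a, rfl⟩, rfl⟩
      · cases x with
        | U => exact Or.inr (Or.inl ⟨⟨_, hw, a, r, rfl⟩, rfl⟩)
        | F => exact absurd rfl hx
        | D => exact Or.inr (Or.inr ⟨⟨_, hw, a, r, rfl⟩, rfl⟩)
    · rintro ⟨x, hx, a, rfl⟩ ⟨y, hy, b, r, rfl⟩ hab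
      have := congrArg (fun z => cU z.1) hab
      simp at this
    · rintro ⟨x, hx, a, rfl⟩ ⟨y, hy, b, r, rfl⟩ hab
      have := congrArg (fun z => cD z.1) hab
      simp at this
    · rintro ⟨x, hx, a, r, rfl⟩ ⟨y, hy, b, r', rfl⟩ hab
      have := congrArg Subtype.val hab
      simp only at this
      obtain ⟨-, h2, -⟩ := rep_cancel (by simp) (by simp) this
      exact absurd h2 (by simp)
  have c1 : Nat.card {w : List SStep // (DelW w ∧ ordW w = n) ∧
      ∃ a, w = List.replicate a SStep.F} = 1 := by
    have e : {w : List SStep // (DelW w ∧ ordW w = n) ∧ ∃ a, w = List.replicate a SStep.F}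
        ≃ Unit :=
      { toFun := fun _ => ()
        invFun := fun _ => ⟨List.replicate n SStep.F,
          ⟨by show cU _ = cD _; simp, by show cU _ + cF _ = n; simp⟩, n, rfl⟩
        left_inv := by
          rintro ⟨w, ⟨h1, h2⟩, a, rfl⟩
          have : a = n := by
            have h3 : cU (List.replicate a SStep.F) + cF (List.replicate a SStep.F) = n := h2
            simpa using h3
          subst this; rfl
        right_inv := fun _ => rfl }
    rw [Nat.card_congr e, Nat.card_unique]
  have c3 : Nat.card {w : List SStep // (DelW w ∧ ordW w = n) ∧
      ∃ a r, w = List.replicate a SStep.F ++ SStep.D :: r} = vN n := by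
    rw [vN]
    apply Nat.card_congr
    refine
      { toFun := fun x => ⟨swW x.1, ⟨?_, ?_⟩, ?_⟩
        invFun := fun x => ⟨swW x.1, ⟨?_, ?_⟩, ?_⟩
        left_inv := ?_
        right_inv := ?_ }
    · have h1 : cU x.1 = cD x.1 := x.2.1.1
      show cU (swW x.1) = cD (swW x.1)
      simp [h1]
    · have h1 : cU x.1 = cD x.1 := x.2.1.1
      have h2 : cU x.1 + cF x.1 = n := x.2.1.2
      show cU (swW x.1) + cF (swW x.1) = n
      simp; omega
    · obtain ⟨a, r, hr⟩ := x.2.2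
      exact ⟨a, swW r, by rw [hr, swW_shape']⟩
    · have h1 : cU x.1 = cD x.1 := x.2.1.1
      show cU (swW x.1) = cD (swW x.1)
      simp [h1]
    · have h1 : cU x.1 = cD x.1 := x.2.1.1
      have h2 : cU x.1 + cF x.1 = n := x.2.1.2
      show cU (swW x.1) + cF (swW x.1) = n
      simp; omega
    · obtain ⟨a, r, hr⟩ := x.2.2
      exact ⟨a, swW r, by rw [hr, swW_shape]⟩
    · rintro ⟨w, hw⟩
      exact Subtype.ext (by simp)
    · rintro ⟨w, hw⟩
      exact Subtype.ext (by simp)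
  have hv : vN n = Nat.card {w : List SStep // (DelW w ∧ ordW w = n) ∧
      ∃ a r, w = List.replicate a SStep.F ++ SStep.U :: r} := rfl
  omega

/-! ### Index finset and vN recurrence -/

def Jfin (n : ℕ) : Finset (ℕ × ℕ × ℕ) :=
  ((Finset.range (n + 1)) ×ˢ (Finset.range (n + 1)) ×ˢ (Finset.range (n + 1))).filter
    (fun x => x.1 + 1 + x.2.1 + x.2.2 = n)

theorem mem_Jfin {n : ℕ} {x : ℕ × ℕ × ℕ} :
    x ∈ Jfin n ↔ x.1 + 1 + x.2.1 + x.2.2 = n := by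
  simp only [Jfin, Finset.mem_filter, Finset.mem_product, Finset.mem_range]
  omega

theorem gl_DelW {a : ℕ} {M N : List SStep} (hM : cU M = cD M) (hN : DelW N) :
    DelW (gl a M N) := by
  have h2 : cU N = cD N := hN
  show cU (gl a M N) = cD (gl a M N)
  simp; omega

theorem gl_surj_V {w : List SStep} (hw : DelW w)
    (hf : ∃ a r, w = List.replicate a SStep.F ++ SStep.U :: r) :
    ∃ a M N, SchW M ∧ DelW N ∧ w = gl a M N := by
  obtain ⟨a, r, rfl⟩ := hf
  have hw' : cU (List.replicate a SStep.F ++ SStep.U :: r)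
      = cD (List.replicate a SStep.F ++ SStep.U :: r) := hw
  simp at hw'
  obtain ⟨M, N, rfl, h1, h2⟩ := first_excess r 0 ⟨r, List.prefix_rfl, by simp at hw' ⊢; omega⟩
  refine ⟨a, M, N, ⟨fun p hp => by simpa using h1 p hp, by omega⟩, ?_, rfl⟩
  show cU N = cD N
  simp at hw'; omega

theorem vN_rec (n : ℕ) : vN n = ∑ x ∈ Jfin n, sN x.2.1 * dN x.2.2 := by
  classical
  have E1 : {y : ℕ × List SStep × List SStep //
      SchW y.2.1 ∧ DelW y.2.2 ∧ y.1 + 1 + ordW y.2.1 + ordW y.2.2 = n} ≃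
      {w : List SStep // (DelW w ∧ ordW w = n) ∧
        ∃ a r, w = List.replicate a SStep.F ++ SStep.U :: r} := by
    refine Equiv.ofBijective (fun y => ⟨gl y.1.1 y.1.2.1 y.1.2.2, ⟨?_, ?_⟩, ?_⟩) ⟨?_, ?_⟩
    · exact gl_DelW y.2.1.2 y.2.2.1
    · have h1 := y.2.1.2
      have h2 : cU y.1.2.2 = cD y.1.2.2 := y.2.2.1
      have h3 := y.2.2.2
      unfold ordW at h3 ⊢
      simp; omega
    · exact ⟨y.1.1, y.1.2.1 ++ SStep.D :: y.1.2.2, rfl⟩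
    · intro y z hyz
      have h := congrArg Subtype.val hyz
      simp only at h
      obtain ⟨e1, e2, e3⟩ := gl_inj h y.2.1 z.2.1
      exact Subtype.ext (Prod.ext e1 (Prod.ext e2 e3))
    · rintro ⟨w, ⟨hDel, hord⟩, hf⟩
      obtain ⟨a, M, N, hM, hN, rfl⟩ := gl_surj_V hDel hf
      refine ⟨⟨(a, M, N), hM, hN, ?_⟩, rfl⟩
      show a + 1 + ordW M + ordW N = n
      have h1 := hM.2
      have h2 : cU N = cD N := hN
      unfold ordW at hord ⊢
      simp at hord
      omega
  have E2 : {y : ℕ × List SStep × List SStep //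
      SchW y.2.1 ∧ DelW y.2.2 ∧ y.1 + 1 + ordW y.2.1 + ordW y.2.2 = n} ≃
      Σ j : {x // x ∈ Jfin n},
        ({M : List SStep // SchW M ∧ ordW M = j.1.2.1} ×
         {N : List SStep // DelW N ∧ ordW N = j.1.2.2}) := by
    refine Equiv.ofBijective (fun y =>
      ⟨⟨(y.1.1, ordW y.1.2.1, ordW y.1.2.2), mem_Jfin.mpr y.2.2.2⟩,
        ⟨⟨y.1.2.1, y.2.1, rfl⟩, ⟨y.1.2.2, y.2.2.1, rfl⟩⟩⟩) ⟨?_, ?_⟩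
    · intro y z hyz
      have e1 : y.1.1 = z.1.1 := congrArg (fun x => x.1.1.1) hyz
      have e2 : y.1.2.1 = z.1.2.1 := congrArg (fun x => x.2.1.1) hyz
      have e3 : y.1.2.2 = z.1.2.2 := congrArg (fun x => x.2.2.1) hyz
      exact Subtype.ext (Prod.ext e1 (Prod.ext e2 e3))
    · rintro ⟨⟨⟨a, m, p⟩, hmem⟩, ⟨M, hM, hm⟩, ⟨N, hN, hp⟩⟩
      simp only at hm hp
      subst hm; subst hp
      exact ⟨⟨(a, M, N), hM, hN, mem_Jfin.mp hmem⟩, rfl⟩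
  rw [vN, ← Nat.card_congr E1, Nat.card_congr E2]
  rw [natCard_sigma_finset (Jfin n)
    (fun x => ({M : List SStep // SchW M ∧ ordW M = x.2.1} ×
      {N : List SStep // DelW N ∧ ordW N = x.2.2}))]
  exact Finset.sum_congr rfl fun x _ => by rw [Nat.card_prod]; rfl

/-! ### hN recurrence -/

theorem g2_eq_append (A : List SStep) (k : ℕ) (B : List SStep) :
    g2 A k B = (A ++ SStep.U :: (List.replicate k SStep.F ++ [SStep.D])) ++ B := by
  simp [g2]

theorem g2_facts {A : List SStep} {k : ℕ} {B : List SStep} (h : SchW (g2 A k B)) :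
    (∀ p, p <+: A → cD p ≤ cU p) ∧ (∀ q, q <+: B → cD q + cD A ≤ cU q + cU A) ∧
      cD A + cD B = cU A + cU B := by
  refine ⟨?_, ?_, ?_⟩
  · intro p hp
    exact h.1 p (hp.trans (A.prefix_append _))
  · intro q hq
    have h1 := h.1
    rw [g2_eq_append] at h1
    have := NN_unappend h1 q hq
    simp at this
    omega
  · have h2 : cU (g2 A k B) = cD (g2 A k B) := h.2
    simp at h2
    omega

theorem g2_T1 (a k : ℕ) (N : List SStep) :
    g2 (List.replicate a SStep.F) k N = gl a (List.replicate k SStep.F) N := rfl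

theorem g2_T2 (a : ℕ) (A' : List SStep) (k : ℕ) (B' N : List SStep) :
    g2 (List.replicate a SStep.F ++ SStep.U :: A') k (B' ++ SStep.D :: N) =
      gl a (g2 A' k B') N := by
  simp [g2, gl]

theorem g2_T3 (a : ℕ) (M A'' : List SStep) (k : ℕ) (B'' : List SStep) :
    g2 (List.replicate a SStep.F ++ SStep.U :: (M ++ SStep.D :: A'')) k B'' =
      gl a M (g2 A'' k B'') := by
  simp [g2, gl]

theorem SchW_rep (k : ℕ) : SchW (List.replicate k SStep.F) := ⟨NN_rep k, by simp⟩

set_option maxHeartbeats 1000000 in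
theorem hN_rec (n : ℕ) :
    hN n = ∑ x ∈ Jfin n, (sN x.2.2 + hN x.2.1 * sN x.2.2 + sN x.2.1 * hN x.2.2) := by
  classical
  have step1 : hN n =
      Nat.card {y : ℕ × ℕ × List SStep // SchW y.2.2 ∧ y.1 + 1 + y.2.1 + ordW y.2.2 = n} +
      Nat.card {y : ℕ × (List SStep × ℕ × List SStep) × List SStep //
        SchW (g2 y.2.1.1 y.2.1.2.1 y.2.1.2.2) ∧ SchW y.2.2 ∧
          y.1 + 1 + ordW (g2 y.2.1.1 y.2.1.2.1 y.2.1.2.2) + ordW y.2.2 = n} +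
      Nat.card {y : ℕ × List SStep × (List SStep × ℕ × List SStep) //
        SchW y.2.1 ∧ SchW (g2 y.2.2.1 y.2.2.2.1 y.2.2.2.2) ∧
          y.1 + 1 + ordW y.2.1 + ordW (g2 y.2.2.1 y.2.2.2.1 y.2.2.2.2) = n} := by
    refine card_three'
      (fun y => ⟨(List.replicate y.1.1 SStep.F, y.1.2.1, y.1.2.2), ?_, ?_⟩)
      (fun y => ⟨(List.replicate y.1.1 SStep.F ++ SStep.U :: y.1.2.1.1, y.1.2.1.2.1,
        y.1.2.1.2.2 ++ SStep.D :: y.1.2.2), ?_, ?_⟩)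
      (fun y => ⟨(List.replicate y.1.1 SStep.F ++ SStep.U ::
          (y.1.2.1 ++ SStep.D :: y.1.2.2.1), y.1.2.2.2.1, y.1.2.2.2.2), ?_, ?_⟩)
      ?_ ?_ ?_ ?_ ?_ ?_ ?_
    · show SchW (gl y.1.1 (List.replicate y.1.2.1 SStep.F) y.1.2.2)
      exact SchW_gl (SchW_rep _) y.2.1
    · show ordW (gl y.1.1 (List.replicate y.1.2.1 SStep.F) y.1.2.2) = n
      have h2 := y.2.2
      unfold ordW at h2 ⊢
      simp; omega
    · show SchW (g2 (List.replicate y.1.1 SStep.F ++ SStep.U :: y.1.2.1.1)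
        y.1.2.1.2.1 (y.1.2.1.2.2 ++ SStep.D :: y.1.2.2))
      rw [g2_T2]
      exact SchW_gl y.2.1 y.2.2.1
    · show ordW (g2 (List.replicate y.1.1 SStep.F ++ SStep.U :: y.1.2.1.1)
        y.1.2.1.2.1 (y.1.2.1.2.2 ++ SStep.D :: y.1.2.2)) = n
      rw [g2_T2]
      have h2 := y.2.2.2
      unfold ordW at h2 ⊢
      simp at h2 ⊢; omega
    · show SchW (g2 (List.replicate y.1.1 SStep.F ++ SStep.U ::
        (y.1.2.1 ++ SStep.D :: y.1.2.2.1)) y.1.2.2.2.1 y.1.2.2.2.2)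
      rw [g2_T3]
      exact SchW_gl y.2.1 y.2.2.1
    · show ordW (g2 (List.replicate y.1.1 SStep.F ++ SStep.U ::
        (y.1.2.1 ++ SStep.D :: y.1.2.2.1)) y.1.2.2.2.1 y.1.2.2.2.2) = n
      rw [g2_T3]
      have h2 := y.2.2.2
      unfold ordW at h2 ⊢
      simp at h2 ⊢; omega
    · -- injectivity of map1
      intro y z h
      have e1 : List.replicate y.1.1 SStep.F = List.replicate z.1.1 SStep.F :=
        congrArg (fun x => x.1.1) h
      have e1' : y.1.1 = z.1.1 := by
        have := congrArg List.length e1; simpa using this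
      have e2 : y.1.2.1 = z.1.2.1 := congrArg (fun x => x.1.2.1) h
      have e3 : y.1.2.2 = z.1.2.2 := congrArg (fun x => x.1.2.2) h
      exact Subtype.ext (Prod.ext e1' (Prod.ext e2 e3))
    · -- injectivity of map2
      intro y z h
      have e1 : List.replicate y.1.1 SStep.F ++ SStep.U :: y.1.2.1.1 =
          List.replicate z.1.1 SStep.F ++ SStep.U :: z.1.2.1.1 :=
        congrArg (fun x => x.1.1) h
      obtain ⟨ea, -, eA⟩ := rep_cancel (by simp) (by simp) e1
      have ek : y.1.2.1.2.1 = z.1.2.1.2.1 := congrArg (fun x => x.1.2.1) h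
      have eB : y.1.2.1.2.2 ++ SStep.D :: y.1.2.2 =
          z.1.2.1.2.2 ++ SStep.D :: z.1.2.2 := congrArg (fun x => x.1.2.2) h
      obtain ⟨f1, f2, f3⟩ := g2_facts y.2.1
      obtain ⟨g1, g2', g3⟩ := g2_facts z.2.1
      rw [← eA] at g2' g3
      have hA : cD y.1.2.1.1 ≤ cU y.1.2.1.1 := f1 _ List.prefix_rfl
      obtain ⟨eB1, eB2⟩ := splitD_unique (t := cU y.1.2.1.1 - cD y.1.2.1.1) eB
        (by omega) (by omega)
        (fun p hp => by have := f2 p hp; omega)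
        (fun p hp => by have := g2' p hp; omega)
      refine Subtype.ext (Prod.ext ea (Prod.ext (Prod.ext eA (Prod.ext ek eB1)) eB2))
    · -- injectivity of map3
      intro y z h
      have e1 : List.replicate y.1.1 SStep.F ++ SStep.U :: (y.1.2.1 ++ SStep.D :: y.1.2.2.1) =
          List.replicate z.1.1 SStep.F ++ SStep.U :: (z.1.2.1 ++ SStep.D :: z.1.2.2.1) :=
        congrArg (fun x => x.1.1) h
      obtain ⟨ea, -, eMA⟩ := rep_cancel (by simp) (by simp) e1
      obtain ⟨eM, eA⟩ := splitD_unique (t := 0) eMA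
        (by have := y.2.1.2; omega) (by have := z.2.1.2; omega)
        (fun p hp => by have := y.2.1.1 p hp; omega)
        (fun p hp => by have := z.2.1.1 p hp; omega)
      have ek : y.1.2.2.2.1 = z.1.2.2.2.1 := congrArg (fun x => x.1.2.1) h
      have eB : y.1.2.2.2.2 = z.1.2.2.2.2 := congrArg (fun x => x.1.2.2) h
      exact Subtype.ext (Prod.ext ea (Prod.ext eM (Prod.ext eA (Prod.ext ek eB))))
    · -- cover
      rintro ⟨⟨A, k, B⟩, hS, hord⟩
      obtain ⟨fA, fB, fbal⟩ := g2_facts hS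
      rcases flats_split fA with ⟨a, rfl⟩ | ⟨a, A₂, rfl⟩
      · refine Or.inl ⟨⟨(a, k, B), ?_, ?_⟩, ?_⟩
        · refine ⟨NN_of_gl_right (by simp) hS.1, ?_⟩
          have := fbal; simp at this
          show cU B = cD B
          omega
        · have h2 := hord
          unfold ordW at h2 ⊢
          simp at h2 ⊢; omega
        · exact Subtype.ext rfl
      · by_cases hex : ∃ p, p <+: A₂ ∧ cU p + 0 < cD p
        · obtain ⟨M, A'', rfl, hpre, hbalM⟩ := first_excess A₂ 0 hex
          refine Or.inr (Or.inr ⟨⟨(a, M, (A'', k, B)), ?_, ?_, ?_⟩, ?_⟩)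
          · exact ⟨fun p hp => by have := hpre p hp; omega, by show cU M = cD M; omega⟩
          · have heq := g2_T3 a M A'' k B
            have h1 := hS.1
            rw [heq] at h1
            refine ⟨NN_of_gl_right (by omega) h1, ?_⟩
            have h2 : cU (g2 (List.replicate a SStep.F ++ SStep.U ::
                (M ++ SStep.D :: A'')) k B) = cD _ := hS.2
            simp at h2
            show cU (g2 A'' k B) = cD (g2 A'' k B)
            simp; omega
          · have h2 := hord
            unfold ordW at h2 ⊢
            simp at h2 ⊢; omega
          · exact Subtype.ext rfl
        · push_neg at hex
          have hA₂ : ∀ p, p <+: A₂ → cD p ≤ cU p := fun p hp => by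
            have := hex p hp; omega
          have hA₂self : cD A₂ ≤ cU A₂ := hA₂ _ List.prefix_rfl
          have hBbal : cD B = cU B + (cU A₂ - cD A₂) + 1 := by
            have := fbal; simp at this; omega
          obtain ⟨B₁, N, rfl, hpreB, hbalB⟩ :=
            first_excess B (cU A₂ - cD A₂) ⟨B, List.prefix_rfl, by omega⟩
          refine Or.inr (Or.inl ⟨⟨(a, (A₂, k, B₁), N), ?_, ?_, ?_⟩, ?_⟩)
          · constructor
            · show ∀ p, p <+: A₂ ++ SStep.U ::
                (List.replicate k SStep.F ++ SStep.D :: B₁) → cD p ≤ cU p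
              apply NN_append' hA₂
              intro q hq
              rcases prefix_cons_cases hq with rfl | ⟨q', hq', rfl⟩
              · simpa using hA₂self
              · rcases prefix_cases hq' with h1 | ⟨r, hr, rfl⟩
                · have h9 : cD q' ≤ cD (List.replicate k SStep.F) :=
                    h1.sublist.count_le SStep.D
                  simp at h9; simp; omega
                · rcases prefix_cons_cases hr with rfl | ⟨s, hs, rfl⟩
                  · simp; omega
                  · have := hpreB s hs; simp; omega
            · show cU (g2 A₂ k B₁) = cD (g2 A₂ k B₁)
              simp; omega
          · have heq := g2_T2 a A₂ k B₁ N
            have hMbal : cU (g2 A₂ k B₁) = cD (g2 A₂ k B₁) := by simp; omega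
            constructor
            · have h1 := hS.1
              rw [heq] at h1
              exact NN_of_gl_right hMbal h1
            · have h2 : cU (g2 (List.replicate a SStep.F ++ SStep.U :: A₂) k
                  (B₁ ++ SStep.D :: N)) = cD _ := hS.2
              simp at h2
              show cU N = cD N
              omega
          · have h2 := hord
            unfold ordW at h2 ⊢
            simp at h2 ⊢; omega
          · exact Subtype.ext rfl
    · -- disjoint 1-2
      intro y z h
      have := congrArg (fun x => cU x.1.1) h
      simp at this
    · -- disjoint 1-3
      intro y z h
      have := congrArg (fun x => cU x.1.1) h
      simp at this
    · -- disjoint 2-3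
      intro y z h
      have e1 : List.replicate y.1.1 SStep.F ++ SStep.U :: y.1.2.1.1 =
          List.replicate z.1.1 SStep.F ++ SStep.U ::
            (z.1.2.1 ++ SStep.D :: z.1.2.2.1) :=
        congrArg (fun x => x.1.1) h
      obtain ⟨-, -, eA⟩ := rep_cancel (by simp) (by simp) e1
      obtain ⟨f1, -, -⟩ := g2_facts y.2.1
      have hp : z.1.2.1 ++ [SStep.D] <+: y.1.2.1.1 := by
        rw [eA]
        exact (List.prefix_append_right_inj _).mpr ⟨z.1.2.2.1, by simp⟩
      have := f1 _ hp
      have hbal := z.2.1.2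
      simp at this
      omega
  rw [step1]
  have c1 : Nat.card {y : ℕ × ℕ × List SStep //
      SchW y.2.2 ∧ y.1 + 1 + y.2.1 + ordW y.2.2 = n} = ∑ x ∈ Jfin n, sN x.2.2 := by
    have E : {y : ℕ × ℕ × List SStep // SchW y.2.2 ∧ y.1 + 1 + y.2.1 + ordW y.2.2 = n} ≃
        Σ j : {x // x ∈ Jfin n}, {N : List SStep // SchW N ∧ ordW N = j.1.2.2} := by
      refine Equiv.ofBijective (fun y =>
        ⟨⟨(y.1.1, y.1.2.1, ordW y.1.2.2), mem_Jfin.mpr y.2.2⟩, ⟨y.1.2.2, y.2.1, rfl⟩⟩)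
        ⟨?_, ?_⟩
      · intro y z h
        have e1 : y.1.1 = z.1.1 := congrArg (fun x => x.1.1.1) h
        have e2 : y.1.2.1 = z.1.2.1 := congrArg (fun x => x.1.1.2.1) h
        have e3 : y.1.2.2 = z.1.2.2 := congrArg (fun x => x.2.1) h
        exact Subtype.ext (Prod.ext e1 (Prod.ext e2 e3))
      · rintro ⟨⟨⟨a, kk, p⟩, hmem⟩, ⟨N, hN2, hp⟩⟩
        simp only at hp
        subst hp
        exact ⟨⟨(a, kk, N), hN2, mem_Jfin.mp hmem⟩, rfl⟩
    rw [Nat.card_congr E, natCard_sigma_finset (Jfin n)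
      (fun x => {N : List SStep // SchW N ∧ ordW N = x.2.2})]
    rfl
  have c2 : Nat.card {y : ℕ × (List SStep × ℕ × List SStep) × List SStep //
      SchW (g2 y.2.1.1 y.2.1.2.1 y.2.1.2.2) ∧ SchW y.2.2 ∧
        y.1 + 1 + ordW (g2 y.2.1.1 y.2.1.2.1 y.2.1.2.2) + ordW y.2.2 = n}
      = ∑ x ∈ Jfin n, hN x.2.1 * sN x.2.2 := by
    have E : {y : ℕ × (List SStep × ℕ × List SStep) × List SStep //
        SchW (g2 y.2.1.1 y.2.1.2.1 y.2.1.2.2) ∧ SchW y.2.2 ∧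
          y.1 + 1 + ordW (g2 y.2.1.1 y.2.1.2.1 y.2.1.2.2) + ordW y.2.2 = n} ≃
        Σ j : {x // x ∈ Jfin n},
          ({z : List SStep × ℕ × List SStep //
            SchW (g2 z.1 z.2.1 z.2.2) ∧ ordW (g2 z.1 z.2.1 z.2.2) = j.1.2.1} ×
           {N : List SStep // SchW N ∧ ordW N = j.1.2.2}) := by
      refine Equiv.ofBijective (fun y =>
        ⟨⟨(y.1.1, ordW (g2 y.1.2.1.1 y.1.2.1.2.1 y.1.2.1.2.2), ordW y.1.2.2),
          mem_Jfin.mpr y.2.2.2⟩,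
          ⟨⟨y.1.2.1, y.2.1, rfl⟩, ⟨y.1.2.2, y.2.2.1, rfl⟩⟩⟩) ⟨?_, ?_⟩
      · intro y z h
        have e1 : y.1.1 = z.1.1 := congrArg (fun x => x.1.1.1) h
        have e2 : y.1.2.1 = z.1.2.1 := congrArg (fun x => x.2.1.1) h
        have e3 : y.1.2.2 = z.1.2.2 := congrArg (fun x => x.2.2.1) h
        exact Subtype.ext (Prod.ext e1 (Prod.ext e2 e3))
      · rintro ⟨⟨⟨a, m, p⟩, hmem⟩, ⟨z, hz, hm⟩, ⟨N, hN2, hp⟩⟩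
        simp only at hm hp
        subst hm; subst hp
        exact ⟨⟨(a, z, N), hz, hN2, mem_Jfin.mp hmem⟩, rfl⟩
    rw [Nat.card_congr E, natCard_sigma_finset (Jfin n)
      (fun x => ({z : List SStep × ℕ × List SStep //
        SchW (g2 z.1 z.2.1 z.2.2) ∧ ordW (g2 z.1 z.2.1 z.2.2) = x.2.1} ×
       {N : List SStep // SchW N ∧ ordW N = x.2.2}))]
    exact Finset.sum_congr rfl fun x _ => by rw [Nat.card_prod]; rfl
  have c3 : Nat.card {y : ℕ × List SStep × (List SStep × ℕ × List SStep) //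
      SchW y.2.1 ∧ SchW (g2 y.2.2.1 y.2.2.2.1 y.2.2.2.2) ∧
        y.1 + 1 + ordW y.2.1 + ordW (g2 y.2.2.1 y.2.2.2.1 y.2.2.2.2) = n}
      = ∑ x ∈ Jfin n, sN x.2.1 * hN x.2.2 := by
    have E : {y : ℕ × List SStep × (List SStep × ℕ × List SStep) //
        SchW y.2.1 ∧ SchW (g2 y.2.2.1 y.2.2.2.1 y.2.2.2.2) ∧
          y.1 + 1 + ordW y.2.1 + ordW (g2 y.2.2.1 y.2.2.2.1 y.2.2.2.2) = n} ≃
        Σ j : {x // x ∈ Jfin n},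
          ({M : List SStep // SchW M ∧ ordW M = j.1.2.1} ×
           {z : List SStep × ℕ × List SStep //
            SchW (g2 z.1 z.2.1 z.2.2) ∧ ordW (g2 z.1 z.2.1 z.2.2) = j.1.2.2}) := by
      refine Equiv.ofBijective (fun y =>
        ⟨⟨(y.1.1, ordW y.1.2.1, ordW (g2 y.1.2.2.1 y.1.2.2.2.1 y.1.2.2.2.2)),
          mem_Jfin.mpr y.2.2.2⟩,
          ⟨⟨y.1.2.1, y.2.1, rfl⟩, ⟨y.1.2.2, y.2.2.1, rfl⟩⟩⟩) ⟨?_, ?_⟩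
      · intro y z h
        have e1 : y.1.1 = z.1.1 := congrArg (fun x => x.1.1.1) h
        have e2 : y.1.2.1 = z.1.2.1 := congrArg (fun x => x.2.1.1) h
        have e3 : y.1.2.2 = z.1.2.2 := congrArg (fun x => x.2.2.1) h
        exact Subtype.ext (Prod.ext e1 (Prod.ext e2 e3))
      · rintro ⟨⟨⟨a, m, p⟩, hmem⟩, ⟨M, hM, hm⟩, ⟨z, hz, hp⟩⟩
        simp only at hm hp
        subst hm; subst hp
        exact ⟨⟨(a, M, z), hM, hz, mem_Jfin.mp hmem⟩, rfl⟩
    rw [Nat.card_congr E, natCard_sigma_finset (Jfin n)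
      (fun x => ({M : List SStep // SchW M ∧ ordW M = x.2.1} ×
       {z : List SStep × ℕ × List SStep //
        SchW (g2 z.1 z.2.1 z.2.2) ∧ ordW (g2 z.1 z.2.1 z.2.2) = x.2.2}))]
    exact Finset.sum_congr rfl fun x _ => by rw [Nat.card_prod]; rfl
  rw [c1, c2, c3, ← Finset.sum_add_distrib, ← Finset.sum_add_distrib]

/-! ### Swap symmetry and the main induction -/

theorem Jfin_swap (n : ℕ) (g : ℕ → ℕ → ℕ → ℕ) :
    ∑ x ∈ Jfin n, g x.1 x.2.1 x.2.2 = ∑ x ∈ Jfin n, g x.1 x.2.2 x.2.1 := by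
  refine Finset.sum_nbij' (i := fun x : ℕ × ℕ × ℕ => (x.1, x.2.2, x.2.1))
    (j := fun x : ℕ × ℕ × ℕ => (x.1, x.2.2, x.2.1)) ?_ ?_ ?_ ?_ ?_
  · intro a ha
    rw [mem_Jfin] at ha
    rw [mem_Jfin]
    show a.1 + 1 + a.2.2 + a.2.1 = n
    omega
  · intro a ha
    rw [mem_Jfin] at ha
    rw [mem_Jfin]
    show a.1 + 1 + a.2.2 + a.2.1 = n
    omega
  · intro a _; rfl
  · intro a _; rfl
  · intro a _; rfl

theorem main_rec (n : ℕ) : hN n = vN n := by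
  induction n using Nat.strong_induction_on with
  | _ n ih =>
    rw [hN_rec, vN_rec]
    have e1 : ∀ x ∈ Jfin n, sN x.2.1 * dN x.2.2
        = sN x.2.1 + sN x.2.1 * hN x.2.2 + sN x.2.1 * hN x.2.2 := by
      intro x hx
      have hb : x.2.2 < n := by have := mem_Jfin.mp hx; omega
      rw [dN_split x.2.2, ← ih _ hb]
      ring
    rw [Finset.sum_congr rfl e1]
    rw [Finset.sum_add_distrib, Finset.sum_add_distrib,
      Finset.sum_add_distrib, Finset.sum_add_distrib]
    have s1 : ∑ x ∈ Jfin n, sN x.2.2 = ∑ x ∈ Jfin n, sN x.2.1 :=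
      Jfin_swap n (fun _ _ c => sN c)
    have s2 : ∑ x ∈ Jfin n, hN x.2.1 * sN x.2.2
        = ∑ x ∈ Jfin n, sN x.2.1 * hN x.2.2 := by
      rw [Jfin_swap n (fun _ b c => hN b * sN c)]
      exact Finset.sum_congr rfl fun x _ => mul_comm _ _
    omega

/-! ### Humps and the g2 form -/

theorem hump_getElem (A : List SStep) (k : ℕ) (B : List SStep) :
    IsHumpAt (g2 A k B) A.length := by
  refine ⟨k, ?_, ?_, ?_⟩
  · rw [g2, List.getElem?_append_right (le_refl A.length)]
    simp
  · intro j hj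
    rw [g2, List.getElem?_append_right (by omega : A.length ≤ A.length + 1 + j)]
    have : A.length + 1 + j - A.length = j + 1 := by omega
    rw [this]
    simp [List.getElem?_append, hj, List.getElem?_replicate]
  · rw [g2, List.getElem?_append_right (by omega : A.length ≤ A.length + 1 + k)]
    have e : A.length + 1 + k - A.length = k + 1 := by omega
    rw [e, List.getElem?_cons_succ,
      List.getElem?_append_right (by simp : (List.replicate k SStep.F).length ≤ k)]
    simp

theorem drop_rep (w : List SStep) : ∀ (k m : ℕ),
    (∀ j, j < k → w[m + j]? = some SStep.F) → w[m + k]? = some SStep.D →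
    List.drop m w = List.replicate k SStep.F ++ SStep.D :: List.drop (m + k + 1) w := by
  intro k
  induction k with
  | zero =>
    intro m _ hD
    rw [Nat.add_zero] at hD
    obtain ⟨hm, e⟩ := List.getElem?_eq_some_iff.mp hD
    rw [List.drop_eq_getElem_cons hm, e]
    simp
  | succ t ih =>
    intro m hF hD
    have h0 : w[m]? = some SStep.F := by
      have := hF 0 (by omega)
      simpa using this
    obtain ⟨hm, e⟩ := List.getElem?_eq_some_iff.mp h0
    rw [List.drop_eq_getElem_cons hm, e]
    have hF' : ∀ j, j < t → w[m + 1 + j]? = some SStep.F := by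
      intro j hj
      have := hF (j + 1) (by omega)
      have e2 : m + (j + 1) = m + 1 + j := by omega
      rw [e2] at this
      exact this
    have hD' : w[m + 1 + t]? = some SStep.D := by
      have e2 : m + (t + 1) = m + 1 + t := by omega
      rw [e2] at hD
      exact hD
    rw [ih (m + 1) hF' hD']
    have e3 : m + 1 + t + 1 = m + (t + 1) + 1 := by omega
    rw [e3, List.replicate_succ]
    rfl

theorem hump_decomp {w : List SStep} {i : ℕ} (h : IsHumpAt w i) :
    ∃ A k B, w = g2 A k B ∧ A.length = i := by
  obtain ⟨k, h1, h2, h3⟩ := h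
  obtain ⟨hi, hU⟩ := List.getElem?_eq_some_iff.mp h1
  have h4 : List.drop (i + 1) w =
      List.replicate k SStep.F ++ SStep.D :: List.drop (i + 1 + k + 1) w :=
    drop_rep w k (i + 1) h2 h3
  refine ⟨List.take i w, k, List.drop (i + 1 + k + 1) w, ?_, by simp; omega⟩
  rw [g2, ← h4]
  conv_lhs => rw [← List.take_append_drop i w]
  rw [List.drop_eq_getElem_cons hi, hU]

theorem card_hump_eq (n : ℕ) :
    Nat.card {p : List SStep × ℕ // IsSchroeder n p.1 ∧ IsHumpAt p.1 p.2} = hN n := by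
  haveI : Finite {p : List SStep × ℕ // IsSchroeder n p.1 ∧ IsHumpAt p.1 p.2} := by
    apply finite_pair (N := 2 * n)
    rintro ⟨w, i⟩ ⟨hS, hH⟩
    have hlen : w.length ≤ 2 * n := by
      have h1 : cU w + cF w = n := hS.1.1
      have h2 : cU w = cD w := hS.1.2
      have := len_eq w
      omega
    obtain ⟨k, h1, -, -⟩ := hH
    have hi : i < w.length := (List.getElem?_eq_some_iff.mp h1).1
    exact ⟨hlen, by omega⟩
  rw [hN]
  apply Nat.card_congr
  refine (Equiv.ofBijective (fun y : {x : List SStep × ℕ × List SStep //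
      SchW (g2 x.1 x.2.1 x.2.2) ∧ ordW (g2 x.1 x.2.1 x.2.2) = n} =>
    (⟨(g2 y.1.1 y.1.2.1 y.1.2.2, y.1.1.length), ⟨⟨y.2.2, y.2.1.2⟩, y.2.1.1⟩,
      hump_getElem y.1.1 y.1.2.1 y.1.2.2⟩ :
      {p : List SStep × ℕ // IsSchroeder n p.1 ∧ IsHumpAt p.1 p.2})) ⟨?_, ?_⟩).symm
  · intro y z h
    have e1 : g2 y.1.1 y.1.2.1 y.1.2.2 = g2 z.1.1 z.1.2.1 z.1.2.2 :=
      congrArg (fun x => x.1.1) h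
    have e2 : y.1.1.length = z.1.1.length := congrArg (fun x => x.1.2) h
    obtain ⟨f1, f2, f3⟩ := g2_inj e1 e2
    exact Subtype.ext (Prod.ext f1 (Prod.ext f2 f3))
  · rintro ⟨⟨w, i⟩, hS, hH⟩
    obtain ⟨A, k, B, rfl, hA⟩ := hump_decomp hH
    refine ⟨⟨(A, k, B), ⟨hS.2, hS.1.2⟩, hS.1.1⟩, ?_⟩
    exact Subtype.ext (Prod.ext rfl hA)

end SP

theorem total_humps_schroeder (n : ℕ) :
    (Nat.card {p : List SStep × ℕ //
        IsSchroeder n p.1 ∧ IsHumpAt p.1 p.2} : ℚ) =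
      (1 / 2) *
        ((∑ k ∈ Finset.range (n + 1),
            ((n + k).choose (2 * k) * (2 * k).choose k : ℚ)) - 1) := by
  rw [SP.card_hump_eq n, SP.main_rec n]
  have h2 : SP.dN n = 1 + 2 * SP.vN n := SP.dN_split n
  have h3 := SP.dN_eq n
  have hsum : (∑ k ∈ Finset.range (n + 1),
      ((n + k).choose (2 * k) * (2 * k).choose k : ℚ)) = (SP.dN n : ℚ) := by
    rw [h3]
    push_cast
    ring
  rw [hsum, h2]
  push_cast
  ring
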